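/- Let p ≥ 1 be an integer, let x₁, …, x_p be the p distinct roots of the Legendre polynomial L_p, and define the weights w_k = ∫_{−1}^{1} ∏_{j≠k} (x − x_j)/(x_k − x_j) dx for k = 1, …, p. Then every weight is strictly positive, the weights sum to 2, and consequently each w_k lies in the interval (0, 2]. -/

import Mathlib

/-- The Legendre polynomial `L_n` on `ℝ`, defined via the Rodrigues formula. -/
noncomputable def legendre (n : ℕ) : ℝ → ℝ :=
  fun x => (1 / ((2 : ℝ) ^ n * (n.factorial : ℝ))) *
    iteratedDeriv n (fun y => (y ^ 2 - 1) ^ n) x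

/-!
The `w_k` are the weights of Gauss–Legendre quadrature. Integrating by parts `p` times in the
Rodrigues formula shows that `L_p` is orthogonal on `[-1, 1]` to every polynomial of degree `< p`;
the node polynomial `ω = ∏ (X - x_j)` is a constant multiple of `L_p`, so it has the same property.
Dividing a polynomial `f` of degree `< 2p` by `ω` and interpolating the remainder at the nodes then
gives `∫ f = ∑ w_k f(x_k)`. Applied to `f = ℓ_k²` (with `ℓ_k` the Lagrange basis polynomial) this
gives `w_k = ∫ ℓ_k² > 0`, and applied to `f = 1` it gives `∑ w_k = 2`.
-/

open Polynomial Finset intervalIntegral Lagrange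

theorem Polynomial.iteratedDeriv_eval {𝕜 : Type*} [NontriviallyNormedField 𝕜] (n : ℕ)
    (q : 𝕜[X]) : iteratedDeriv n (fun y => q.eval y) = fun y => (derivative^[n] q).eval y := by
  induction n generalizing q with
  | zero => simp
  | succ n ih =>
    rw [iteratedDeriv_succ', Function.iterate_succ_apply, ← ih]
    congr 1
    ext y
    exact q.deriv

theorem Polynomial.isRoot_iterate_derivative_of_pow_dvd {R : Type*} [CommRing R] {p : R[X]}
    {a : R} {n i : ℕ} (h : (X - C a) ^ n ∣ p) (hi : i < n) : (derivative^[i] p).IsRoot a :=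
  dvd_iff_isRoot.mp <| (dvd_pow_self _ (Nat.sub_ne_zero_of_lt hi)).trans
    (pow_sub_dvd_iterate_derivative_of_pow_dvd i h)

theorem Lagrange.nodal_dvd {F ι : Type*} [Field F] {s : Finset ι} {v : ι → F}
    (hvs : Set.InjOn v s) {p : F[X]} (hp : ∀ i ∈ s, p.IsRoot (v i)) : nodal s v ∣ p :=
  prod_dvd_of_coprime
    (fun _ hi _ hj hij =>
      isCoprime_X_sub_C_of_isUnit_sub (sub_ne_zero_of_ne (hvs.ne hi hj hij)).isUnit)
    fun i hi => dvd_iff_isRoot.mpr (hp i hi)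

theorem Lagrange.eval_basis {F ι : Type*} [Field F] [DecidableEq ι] (s : Finset ι) (v : ι → F)
    (i : ι) (t : F) :
    (Lagrange.basis s v i).eval t = ∏ j ∈ s.erase i, (t - v j) / (v i - v j) := by
  simp only [Lagrange.basis, eval_prod, basisDivisor, eval_mul, eval_C, eval_sub, eval_X]
  exact prod_congr rfl fun j _ => by rw [div_eq_inv_mul]

section Integrals

variable {a b : ℝ}

theorem Polynomial.intervalIntegrable_eval (q : ℝ[X]) (a b : ℝ) :
    IntervalIntegrable (fun t => q.eval t) MeasureTheory.volume a b :=
  q.continuous.intervalIntegrable a b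

theorem Polynomial.integral_eval_derivative (q : ℝ[X]) (a b : ℝ) :
    ∫ t in a..b, (derivative q).eval t = q.eval b - q.eval a :=
  integral_eq_sub_of_hasDerivAt (fun t _ => q.hasDerivAt t) (intervalIntegrable_eval _ a b)

theorem Polynomial.integral_eval_sq_pos {q : ℝ[X]} (hq : q ≠ 0) (hab : a < b) :
    0 < ∫ t in a..b, q.eval t ^ 2 := by
  obtain ⟨c, hc, hroot⟩ := (Set.Icc_infinite hab).exists_notMem_finset q.roots.toFinset
  refine integral_pos hab (q.continuous.pow 2).continuousOn (fun t _ => sq_nonneg _) ⟨c, hc, ?_⟩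
  rw [Multiset.mem_toFinset, mem_roots hq, IsRoot.def] at hroot
  exact sq_pos_of_ne_zero hroot

theorem Polynomial.integral_iterate_derivative_mul_eq_zero {G : ℝ[X]} {j : ℕ}
    (hG : ∀ i < j, (derivative^[i] G).IsRoot a ∧ (derivative^[i] G).IsRoot b) {q : ℝ[X]}
    (hq : q.natDegree < j) : ∫ t in a..b, (derivative^[j] G * q).eval t = 0 := by
  induction j generalizing q with
  | zero => exact absurd hq (Nat.not_lt_zero _)
  | succ j ih =>
    have hsplit : derivative^[j + 1] G * q =
        derivative (derivative^[j] G * q) - derivative^[j] G * derivative q := by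
      rw [derivative_mul, Function.iterate_succ_apply']; ring
    have hq' : ∫ t in a..b, (derivative^[j] G * derivative q).eval t = 0 := by
      rcases eq_or_ne q.natDegree 0 with h0 | h0
      · simp [derivative_of_natDegree_zero h0]
      · exact ih (fun i hi => hG i (by omega)) (by have := natDegree_derivative_lt h0; omega)
    obtain ⟨ha, hb⟩ := hG j j.lt_succ_self
    simp only [hsplit, eval_sub]
    rw [integral_sub (intervalIntegrable_eval _ _ _) (intervalIntegrable_eval _ _ _),
      integral_eval_derivative, hq']
    simp [ha.eq_zero, hb.eq_zero]

end Integrals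

noncomputable def rodrigues (n : ℕ) : ℝ[X] := derivative^[n] ((X ^ 2 - 1) ^ n)

theorem legendre_eq_eval_rodrigues (n : ℕ) (t : ℝ) :
    legendre n t = 1 / (2 ^ n * n.factorial) * (rodrigues n).eval t := by
  have h : (fun y : ℝ => (y ^ 2 - 1) ^ n) = fun y => ((X ^ 2 - 1) ^ n : ℝ[X]).eval y := by simp
  rw [legendre, h, iteratedDeriv_eval, rodrigues]

theorem X_sq_sub_one_pow_eq (n : ℕ) :
    ((X ^ 2 - 1) ^ n : ℝ[X]) = (X - C (-1)) ^ n * (X - C 1) ^ n := by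
  rw [← mul_pow]; congr 1; simp; ring

theorem integral_rodrigues_mul_eq_zero {n : ℕ} {q : ℝ[X]} (hq : q.natDegree < n) :
    ∫ t in (-1)..1, (rodrigues n * q).eval t = 0 := by
  rw [rodrigues, X_sq_sub_one_pow_eq]
  exact integral_iterate_derivative_mul_eq_zero (fun i hi =>
    ⟨isRoot_iterate_derivative_of_pow_dvd (dvd_mul_right _ _) hi,
      isRoot_iterate_derivative_of_pow_dvd (dvd_mul_left _ _) hi⟩) hq

theorem natDegree_X_sq_sub_one_pow (n : ℕ) : ((X ^ 2 - 1) ^ n : ℝ[X]).natDegree = 2 * n := by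
  rw [natDegree_pow, ← C_1, natDegree_X_pow_sub_C, mul_comm]

theorem natDegree_rodrigues_le (n : ℕ) : (rodrigues n).natDegree ≤ n :=
  (natDegree_iterate_derivative _ n).trans (by rw [natDegree_X_sq_sub_one_pow]; omega)

theorem coeff_rodrigues_self (n : ℕ) : (rodrigues n).coeff n = (n + n).descFactorial n := by
  have hmonic : ((X ^ 2 - 1) ^ n : ℝ[X]).Monic := by
    simpa using (monic_X_pow_sub_C (1 : ℝ) two_ne_zero).pow n
  have hlead := hmonic.coeff_natDegree
  rw [natDegree_X_sq_sub_one_pow, two_mul] at hlead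
  rw [rodrigues, coeff_iterate_derivative, hlead, nsmul_one]

theorem rodrigues_ne_zero (n : ℕ) : rodrigues n ≠ 0 := by
  intro h
  have := coeff_rodrigues_self n
  rw [h, coeff_zero, eq_comm, Nat.cast_eq_zero, Nat.descFactorial_eq_zero_iff_lt] at this
  omega

theorem integral_nodal_mul_eq_zero_of_isRoot_rodrigues {ι : Type*} {s : Finset ι} {v : ι → ℝ}
    (hvs : Set.InjOn v s)
    (hroot : ∀ i ∈ s, (rodrigues #s).IsRoot (v i)) {q : ℝ[X]} (hq : q.natDegree < #s) :
    ∫ t in (-1)..1, (nodal s v * q).eval t = 0 := by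
  set c := (rodrigues #s).leadingCoeff
  have h : rodrigues #s = C c * nodal s v :=
    eq_leadingCoeff_mul_of_monic_of_dvd_of_natDegree_le nodal_monic (nodal_dvd hvs hroot)
      (natDegree_nodal (v := v) ▸ natDegree_rodrigues_le _)
  have hc : c ≠ 0 := leadingCoeff_ne_zero.mpr (rodrigues_ne_zero _)
  have h' : nodal s v * q = C c⁻¹ * (rodrigues #s * q) := by
    rw [h, ← mul_assoc, ← mul_assoc, ← C_mul, inv_mul_cancel₀ hc, C_1, one_mul]
  simp only [h', eval_C_mul]
  rw [integral_const_mul, integral_rodrigues_mul_eq_zero hq, mul_zero]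

noncomputable def quadratureWeight {ι : Type*} [DecidableEq ι] (s : Finset ι) (v : ι → ℝ)
    (a b : ℝ) (i : ι) : ℝ :=
  ∫ t in a..b, (Lagrange.basis s v i).eval t

section GaussQuadrature

variable {ι : Type*} [DecidableEq ι] {s : Finset ι} {v : ι → ℝ} {a b : ℝ}

theorem integral_eval_eq_sum_quadratureWeight_of_degree_lt (hvs : Set.InjOn v s) {r : ℝ[X]}
    (hr : r.degree < #s) :
    ∫ t in a..b, r.eval t = ∑ i ∈ s, r.eval (v i) * quadratureWeight s v a b i := by
  conv_lhs => rw [eq_interpolate hvs hr]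
  simp only [interpolate_apply, eval_finsetSum, eval_C_mul]
  rw [integral_finsetSum fun i _ => (intervalIntegrable_eval _ a b).const_mul _]
  simp only [integral_const_mul, quadratureWeight]

theorem integral_eval_eq_sum_quadratureWeight (hvs : Set.InjOn v s)
    (horth : ∀ q : ℝ[X], q.natDegree < #s → ∫ t in a..b, (nodal s v * q).eval t = 0)
    {f : ℝ[X]} (hf : f.natDegree < 2 * #s) :
    ∫ t in a..b, f.eval t = ∑ i ∈ s, f.eval (v i) * quadratureWeight s v a b i := by
  have hdiv := modByMonic_add_div f (nodal s v)
  have hq : (f /ₘ nodal s v).natDegree < #s := by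
    rw [natDegree_divByMonic _ nodal_monic, natDegree_nodal]; omega
  have hr : (f %ₘ nodal s v).degree < #s :=
    degree_nodal (s := s) (v := v) ▸ degree_modByMonic_lt _ nodal_monic
  have hnodes : ∀ i ∈ s, (f %ₘ nodal s v).eval (v i) = f.eval (v i) := fun i hi => by
    conv_rhs => rw [← hdiv]
    simp [eval_nodal_at_node hi]
  calc ∫ t in a..b, f.eval t
      = (∫ t in a..b, (f %ₘ nodal s v).eval t) +
          ∫ t in a..b, (nodal s v * (f /ₘ nodal s v)).eval t := by
        rw [← integral_add (intervalIntegrable_eval _ _ _) (intervalIntegrable_eval _ _ _)]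
        simp only [← eval_add, hdiv]
    _ = ∑ i ∈ s, f.eval (v i) * quadratureWeight s v a b i := by
        rw [integral_eval_eq_sum_quadratureWeight_of_degree_lt hvs hr, horth _ hq, add_zero]
        exact sum_congr rfl fun i hi => by rw [hnodes i hi]

variable (hvs : Set.InjOn v s)
    (horth : ∀ q : ℝ[X], q.natDegree < #s → ∫ t in a..b, (nodal s v * q).eval t = 0)
include hvs horth

theorem quadratureWeight_eq_integral_sq {i : ι} (hi : i ∈ s) :
    quadratureWeight s v a b i = ∫ t in a..b, (Lagrange.basis s v i).eval t ^ 2 := by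
  have hdeg : (Lagrange.basis s v i ^ 2).natDegree < 2 * #s := by
    rw [natDegree_pow, natDegree_basis hvs hi]
    have := card_pos.mpr ⟨i, hi⟩
    omega
  have h := integral_eval_eq_sum_quadratureWeight hvs horth hdeg
  simp only [eval_pow] at h
  rw [h, sum_eq_single i (fun j hj hji => by rw [eval_basis_of_ne hji.symm hj]; ring)
    (absurd hi), eval_basis_self hvs hi, one_pow, one_mul]

theorem quadratureWeight_pos (hab : a < b) {i : ι} (hi : i ∈ s) :
    0 < quadratureWeight s v a b i :=
  quadratureWeight_eq_integral_sq hvs horth hi ▸ integral_eval_sq_pos (basis_ne_zero hvs hi) hab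

theorem sum_quadratureWeight (hs : s.Nonempty) :
    ∑ i ∈ s, quadratureWeight s v a b i = b - a := by
  have h := integral_eval_eq_sum_quadratureWeight hvs horth (f := 1)
    (by rw [natDegree_one]; have := hs.card_pos; omega)
  simpa using h.symm

end GaussQuadrature

/-- Let `x₁, …, x_p` be the `p` distinct roots of the Legendre polynomial
`L_p`, and let `w_k = ∫_{-1}^1 ∏_{j ≠ k} (t - x_j)/(x_k - x_j) dt`. Then every weight is
strictly positive, the weights sum to `2`, and consequently each `w_k ∈ (0, 2]`. -/
theorem statement14 (p : ℕ) (hp : 1 ≤ p) (x : Fin p → ℝ)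
    (hxinj : Function.Injective x) (hxroot : ∀ k, legendre p (x k) = 0)
    (w : Fin p → ℝ)
    (hw : ∀ k, w k = ∫ t in (-1 : ℝ)..1,
      ∏ j ∈ Finset.univ.erase k, (t - x j) / (x k - x j)) :
    (∀ k, 0 < w k) ∧ (∑ k, w k = 2) ∧ (∀ k, w k ∈ Set.Ioc (0 : ℝ) 2) := by
  have hxw : ∀ k, w k = quadratureWeight univ x (-1) 1 k := fun k => by
    simp only [hw k, quadratureWeight, eval_basis]
  have hroot : ∀ k ∈ (univ : Finset (Fin p)), (rodrigues #univ).IsRoot (x k) := fun k _ => by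
    have h := hxroot k
    rw [legendre_eq_eval_rodrigues] at h
    rw [card_fin]
    exact (mul_eq_zero.mp h).resolve_left (by positivity)
  have horth := fun (q : ℝ[X]) (hq : q.natDegree < _) =>
    integral_nodal_mul_eq_zero_of_isRoot_rodrigues hxinj.injOn hroot hq
  have hpos : ∀ k, 0 < w k := fun k =>
    hxw k ▸ quadratureWeight_pos hxinj.injOn horth (by norm_num) (mem_univ k)
  have hsum : ∑ k, w k = 2 := by
    simp only [hxw]
    rw [sum_quadratureWeight hxinj.injOn horth ⟨⟨0, hp⟩, mem_univ _⟩]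
    norm_num
  exact ⟨hpos, hsum, fun k =>
    ⟨hpos k, hsum ▸ single_le_sum (fun j _ => (hpos j).le) (mem_univ k)⟩⟩
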